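/- (Theorem 3, estimate of the energy descent) Fix a number of classes R ≥ 1 and a timestep Δ > 0. Let C ⊆ ℝ^{N×R} be a nonempty convex set, and write a matrix F ∈ ℝ^{N×R} as F = [f_1, …, f_R] with columns f_r ∈ ℝ^N. Let F^k = [f_1^k, …, f_R^k] ∈ C with B(f_r^k) ≠ 0 for all r, set c_r = Δ/B(f_r^k) and d_r = Δ·E(f_r^k)/B(f_r^k) where E(f) := T(f)/B(f), define 𝓣(F) := ∑_{r=1}^R c_r T(f_r) and 𝓑(F) := ∑_{r=1}^R d_r B(f_r), let V^k be a matrix whose r-th column is d_r times the subgradient vector of B at f_r^k given by the Theorem 2 formula, and suppose F^{k+1} minimizes G ↦ 𝓣(G) + (1/2)‖G − (F^k + V^k)‖_F² over C. Then F^{k+1} ∈ C, and if additionally B(f_r^{k+1}) ≠ 0 for all r, then ∑_{r=1}^R (B(f_r^{k+1})/B(f_r^k))·(E(f_r^k) − E(f_r^{k+1})) ≥ ‖F^k − F^{k+1}‖_F² / Δ. -/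

import Mathlib

/-- Total variation of a vertex function on the weighted graph with weights `w`. -/
def totalVariation (N : ℕ) (w : Fin N → Fin N → ℝ) (f : Fin N → ℝ) : ℝ :=
  ∑ i, ∑ j, w i j * |f i - f j|

/-- Asymmetric absolute value: `|t|_λ = λt` if `t ≥ 0` and `-t` if `t < 0`. -/
noncomputable def asymAbs (lam t : ℝ) : ℝ := if 0 ≤ t then lam * t else -t

/-- The λ-median of `f`: the (k+1)-st largest entry (counted with multiplicity)
of the vector `(f x₁, …, f x_N)`, where `k = ⌊N/(λ+1)⌋`. -/
noncomputable def lamMedian (N : ℕ) (lam : ℝ) (f : Fin N → ℝ) : ℝ :=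
  ((Finset.univ.val.map f).sort (· ≥ ·)).getD (Nat.floor ((N : ℝ) / (lam + 1))) 0

/-- The balance functional `B(f) = ‖f − med_λ(f)·1‖_{1,λ}`. -/
noncomputable def balanceFun (N : ℕ) (lam : ℝ) (f : Fin N → ℝ) : ℝ :=
  ∑ i, asymAbs lam (f i - lamMedian N lam f)

/-- The subgradient vector of `B` at `f` from the Theorem 2 formula. -/
noncomputable def medSubgrad (N : ℕ) (lam : ℝ) (f : Fin N → ℝ) : Fin N → ℝ := fun i =>
  if lamMedian N lam f < f i then lam
  else if f i < lamMedian N lam f then -1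
  else
    (((Finset.univ.filter fun j => f j < lamMedian N lam f).card : ℝ) -
        lam * ((Finset.univ.filter fun j => lamMedian N lam f < f j).card : ℝ)) /
      ((Finset.univ.filter fun j => f j = lamMedian N lam f).card : ℝ)

/-- The cluster energy `E(f) = T(f)/B(f)`. -/
noncomputable def clusterEnergy (N : ℕ) (w : Fin N → Fin N → ℝ) (lam : ℝ)
    (f : Fin N → ℝ) : ℝ :=
  totalVariation N w f / balanceFun N lam f

/-! The iteration is a proximal step for the convex functional `𝓣` taken from `F^k + V^k`, where
the columns of `V^k` are `d_r` times a subgradient of `B`. Comparing `F^{k+1}` with the points of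
the segment towards `F^k` and letting them approach `F^{k+1}` gives the first-order condition
`𝓣(F^{k+1}) + ‖F^k - F^{k+1}‖² ≤ 𝓣(F^k) + ⟨V^k, F^{k+1} - F^k⟩`, and the subgradient inequality
bounds the last term by `∑ d_r (B(f_r^{k+1}) - B(f_r^k))`. As `d_r = Δ T(f_r^k) / B(f_r^k)²`, this
rearranges to the energy estimate.

The Theorem 2 vector is a subgradient of `B` because of the counting properties
`(λ + 1) n⁺ ≤ N < (λ + 1) (n⁺ + n⁰)` of the λ-median: they put its value on the median level in
`[-1, λ]` and make its entries sum to zero, so that the shift of the median from `f` to `g` drops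
out. -/

open Finset Set Filter Topology

namespace List

variable {α : Type*} [LinearOrder α] {l : List α} {k : ℕ}

theorem SortedGE.countP_getElem_lt_le (hl : l.SortedGE) (hk : k < l.length) :
    l.countP (fun x => l[k] < x) ≤ k := by
  have hdrop : (l.drop k).countP (fun x => l[k] < x) = 0 := by
    refine countP_eq_zero.2 fun a ha => ?_
    obtain ⟨j, hj, rfl⟩ := mem_iff_getElem.1 ha
    simpa [getElem_drop] using hl.getElem_ge_getElem_of_le (Nat.le_add_right k j)
  calc l.countP (fun x => l[k] < x)
      = (l.take k).countP (fun x => l[k] < x) + (l.drop k).countP (fun x => l[k] < x) := by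
        rw [← countP_append, take_append_drop]
    _ ≤ k := by rw [hdrop, add_zero]; exact countP_le_length.trans (length_take_le k l)

theorem SortedGE.lt_countP_getElem_le (hl : l.SortedGE) (hk : k < l.length) :
    k < l.countP (fun x => l[k] ≤ x) := by
  have htake : (l.take (k + 1)).countP (fun x => l[k] ≤ x) = k + 1 := by
    rw [countP_eq_length.2, length_take_of_le hk]
    intro a ha
    obtain ⟨j, hj, rfl⟩ := mem_iff_getElem.1 ha
    simpa [getElem_take] using hl.getElem_ge_getElem_of_le (by simp at hj; omega)
  have hsub := (take_sublist (k + 1) l).countP_le (p := fun x => l[k] ≤ x)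
  omega

end List

theorem card_filter_eq_countP_sort {ι : Type*} [Fintype ι] (f : ι → ℝ) (p : ℝ → Prop)
    [DecidablePred p] :
    #{j | p (f j)} = ((univ.val.map f).sort (· ≥ ·)).countP (fun x => p x) := by
  rw [← Multiset.coe_countP, Multiset.sort_eq, Multiset.countP_map]
  rfl

section LamMedian

variable {N : ℕ} {lam : ℝ} (f : Fin N → ℝ)

theorem exists_eq_lamMedian (hk : ⌊(N : ℝ) / (lam + 1)⌋₊ + 1 ≤ N) :
    ∃ i, f i = lamMedian N lam f := by
  have hlen : ⌊(N : ℝ) / (lam + 1)⌋₊ < ((univ.val.map f).sort (· ≥ ·)).length := by simpa using hk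
  rw [lamMedian, List.getD_eq_getElem _ _ hlen]
  obtain ⟨i, -, hi⟩ := Multiset.mem_map.1 ((Multiset.mem_sort _).1 (List.getElem_mem hlen))
  exact ⟨i, hi⟩

theorem card_lamMedian_lt_le (hk : ⌊(N : ℝ) / (lam + 1)⌋₊ + 1 ≤ N) :
    #{j | lamMedian N lam f < f j} ≤ ⌊(N : ℝ) / (lam + 1)⌋₊ := by
  have hlen : ⌊(N : ℝ) / (lam + 1)⌋₊ < ((univ.val.map f).sort (· ≥ ·)).length := by simpa using hk
  rw [card_filter_eq_countP_sort, lamMedian, List.getD_eq_getElem _ _ hlen]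
  exact (Multiset.pairwise_sort _ _).sortedGE.countP_getElem_lt_le hlen

theorem lt_card_lamMedian_le (hk : ⌊(N : ℝ) / (lam + 1)⌋₊ + 1 ≤ N) :
    ⌊(N : ℝ) / (lam + 1)⌋₊ < #{j | lamMedian N lam f ≤ f j} := by
  have hlen : ⌊(N : ℝ) / (lam + 1)⌋₊ < ((univ.val.map f).sort (· ≥ ·)).length := by simpa using hk
  rw [card_filter_eq_countP_sort, lamMedian, List.getD_eq_getElem _ _ hlen]
  exact (Multiset.pairwise_sort _ _).sortedGE.lt_countP_getElem_le hlen

theorem mul_card_lamMedian_lt_le (hlam : 0 < lam + 1) (hk : ⌊(N : ℝ) / (lam + 1)⌋₊ + 1 ≤ N) :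
    (lam + 1) * #{j | lamMedian N lam f < f j} ≤ N :=
  calc (lam + 1) * #{j | lamMedian N lam f < f j}
      ≤ (lam + 1) * ⌊(N : ℝ) / (lam + 1)⌋₊ := by
        gcongr; exact_mod_cast card_lamMedian_lt_le f hk
    _ ≤ N := by
        rw [mul_comm, ← le_div_iff₀ hlam]; exact Nat.floor_le (by positivity)

theorem lt_mul_card_lamMedian_le (hlam : 0 < lam + 1) (hk : ⌊(N : ℝ) / (lam + 1)⌋₊ + 1 ≤ N) :
    (N : ℝ) < (lam + 1) * #{j | lamMedian N lam f ≤ f j} :=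
  calc (N : ℝ) < (lam + 1) * (⌊(N : ℝ) / (lam + 1)⌋₊ + 1) := by
        rw [mul_comm, ← div_lt_iff₀ hlam]; exact Nat.lt_floor_add_one _
    _ ≤ (lam + 1) * #{j | lamMedian N lam f ≤ f j} := by
        gcongr; exact_mod_cast lt_card_lamMedian_le f hk

end LamMedian

theorem asymAbs_nonneg {lam : ℝ} (hlam : 0 ≤ lam) (t : ℝ) : 0 ≤ asymAbs lam t := by
  unfold asymAbs
  split_ifs with ht
  exacts [mul_nonneg hlam ht, by linarith]

theorem balanceFun_nonneg {N : ℕ} {lam : ℝ} (hlam : 0 ≤ lam) (f : Fin N → ℝ) :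
    0 ≤ balanceFun N lam f :=
  sum_nonneg fun _ _ => asymAbs_nonneg hlam _

theorem asymAbs_add_mul_sub_le {lam s t v : ℝ} (hv : v ∈ Icc (-1) lam) (hpos : 0 < t → v = lam)
    (hneg : t < 0 → v = -1) : asymAbs lam t + v * (s - t) ≤ asymAbs lam s := by
  obtain ⟨hv1, hv2⟩ := hv
  rcases lt_trichotomy t 0 with ht | rfl | ht
  · rw [hneg ht] at hv2 ⊢
    simp only [asymAbs, if_neg ht.not_ge]; split_ifs <;> nlinarith
  · simp only [asymAbs, le_refl, if_true]; split_ifs <;> nlinarith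
  · rw [hpos ht] at hv1 ⊢
    simp only [asymAbs, if_pos ht.le]; split_ifs <;> nlinarith

theorem sum_asymAbs_add_sum_mul_le {ι : Type*} [Fintype ι] {lam m : ℝ} {f v : ι → ℝ}
    (hv : ∀ i, v i ∈ Icc (-1) lam) (hpos : ∀ i, m < f i → v i = lam)
    (hneg : ∀ i, f i < m → v i = -1) (hsum : ∑ i, v i = 0) (g : ι → ℝ) (m' : ℝ) :
    ∑ i, asymAbs lam (f i - m) + ∑ i, v i * (g i - f i) ≤ ∑ i, asymAbs lam (g i - m') := by
  have hshift : ∑ i, v i * (g i - f i) = ∑ i, v i * ((g i - m') - (f i - m)) := by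
    simp only [mul_sub, sum_sub_distrib, ← sum_mul, hsum, zero_mul, sub_zero]
  rw [hshift, ← sum_add_distrib]
  exact sum_le_sum fun i _ => asymAbs_add_mul_sub_le (hv i)
    (fun h => hpos i (sub_pos.1 h)) (fun h => hneg i (sub_neg.1 h))

section MedSubgrad

variable {N : ℕ} {lam : ℝ} (f : Fin N → ℝ)

theorem card_filter_eq_lamMedian_pos (hk : ⌊(N : ℝ) / (lam + 1)⌋₊ + 1 ≤ N) :
    0 < #{j | f j = lamMedian N lam f} :=
  let ⟨i₀, hi₀⟩ := exists_eq_lamMedian f hk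
  card_pos.2 ⟨i₀, by simpa using hi₀⟩

theorem medSubgrad_mem_Icc (hlam : 0 < lam + 1) (hk : ⌊(N : ℝ) / (lam + 1)⌋₊ + 1 ≤ N) (i : Fin N) :
    medSubgrad N lam f i ∈ Icc (-1) lam := by
  have hupper := mul_card_lamMedian_lt_le f hlam hk
  have hlower := lt_mul_card_lamMedian_le f hlam hk
  have hn₀ : (0 : ℝ) < #{j | f j = lamMedian N lam f} := by
    exact_mod_cast card_filter_eq_lamMedian_pos f hk
  set m := lamMedian N lam f
  have hge : #{j | m ≤ f j} = #{j | m < f j} + #{j | f j = m} := by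
    rw [← card_union_of_disjoint (disjoint_filter.2 fun j _ h h' => h.ne' h')]
    congr 1; ext j; simp [le_iff_lt_or_eq, eq_comm]
  have htot : #{j | f j < m} + #{j | m ≤ f j} = N := by
    simpa using card_filter_add_card_filter_not (s := univ) (fun j => f j < m)
  have htotR : (N : ℝ) = #{j | f j < m} + #{j | m < f j} + #{j | f j = m} := by
    rw [hge] at htot; exact_mod_cast (by omega : N = _)
  rw [hge] at hlower
  push_cast at hlower
  unfold medSubgrad
  split_ifs
  · exact ⟨by linarith, le_rfl⟩
  · exact ⟨le_rfl, by linarith⟩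
  · constructor
    · rw [le_div_iff₀ hn₀]; linarith
    · rw [div_le_iff₀ hn₀]; linarith

theorem sum_medSubgrad (hk : ⌊(N : ℝ) / (lam + 1)⌋₊ + 1 ≤ N) : ∑ i, medSubgrad N lam f i = 0 := by
  set m := lamMedian N lam f
  have hn₀ : (#{j | f j = m} : ℝ) ≠ 0 := by exact_mod_cast (card_filter_eq_lamMedian_pos f hk).ne'
  have hsplit : ∀ i, medSubgrad N lam f i = (if m < f i then lam else 0) +
      (if f i < m then -1 else 0) + (if f i = m then medSubgrad N lam f i else 0) := by
    intro i
    rcases lt_trichotomy (f i) m with h | h | h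
    · simp [medSubgrad, m, h, h.not_gt, h.ne]
    · simp [h]
    · simp [medSubgrad, m, h, h.not_gt, h.ne']
  rw [sum_congr rfl fun i _ => hsplit i]
  simp only [sum_add_distrib, ← sum_filter]
  have hmid : ∀ i ∈ ({j | f j = m} : Finset (Fin N)), medSubgrad N lam f i =
      (#{j | f j < m} - lam * #{j | m < f j}) / #{j | f j = m} := by
    intro i hi
    simp [medSubgrad, m, (mem_filter.1 hi).2]
  rw [sum_congr rfl hmid]
  simp only [sum_const, nsmul_eq_mul]
  field_simp
  ring

end MedSubgrad

theorem balanceFun_add_sum_medSubgrad_mul_le {N : ℕ} {lam : ℝ} (hlam : 0 < lam + 1)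
    (hk : ⌊(N : ℝ) / (lam + 1)⌋₊ + 1 ≤ N) (f g : Fin N → ℝ) :
    balanceFun N lam f + ∑ i, medSubgrad N lam f i * (g i - f i) ≤ balanceFun N lam g :=
  sum_asymAbs_add_sum_mul_le (medSubgrad_mem_Icc f hlam hk) (fun _ h => if_pos h)
    (fun _ h => by simp [medSubgrad, h, h.not_gt]) (sum_medSubgrad f hk) g _

section TotalVariation

variable {N : ℕ} {w : Fin N → Fin N → ℝ}

theorem totalVariation_nonneg (hw : ∀ i j, 0 ≤ w i j) (f : Fin N → ℝ) :
    0 ≤ totalVariation N w f :=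
  sum_nonneg fun i _ => sum_nonneg fun j _ => mul_nonneg (hw i j) (abs_nonneg _)

theorem convexOn_totalVariation (hw : ∀ i j, 0 ≤ w i j) :
    ConvexOn ℝ univ (totalVariation N w) := by
  refine ⟨convex_univ, fun f _ g _ a b ha hb _ => ?_⟩
  simp only [totalVariation, smul_eq_mul, mul_sum, ← sum_add_distrib]
  refine sum_le_sum fun i _ => sum_le_sum fun j _ => ?_
  have hsplit : (a • f + b • g) i - (a • f + b • g) j = a * (f i - f j) + b * (g i - g j) := by
    simp only [Pi.add_apply, Pi.smul_apply, smul_eq_mul]; ring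
  calc w i j * |(a • f + b • g) i - (a • f + b • g) j|
      ≤ w i j * (a * |f i - f j| + b * |g i - g j|) := by
        rw [hsplit]
        gcongr
        · exact hw i j
        · exact (abs_add_le _ _).trans_eq (by rw [abs_mul, abs_mul, abs_of_nonneg ha, abs_of_nonneg hb])
    _ = a * (w i j * |f i - f j|) + b * (w i j * |g i - g j|) := by ring

end TotalVariation

theorem balanceFun_div_mul_clusterEnergy_sub_mul {N : ℕ} {w : Fin N → Fin N → ℝ} {lam : ℝ}
    {f g : Fin N → ℝ} (hf : balanceFun N lam f ≠ 0) (hg : balanceFun N lam g ≠ 0) (Δ : ℝ) :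
    balanceFun N lam g / balanceFun N lam f *
        (clusterEnergy N w lam f - clusterEnergy N w lam g) * Δ =
      Δ * clusterEnergy N w lam f / balanceFun N lam f *
          (balanceFun N lam g - balanceFun N lam f) +
        Δ / balanceFun N lam f * totalVariation N w f -
        Δ / balanceFun N lam f * totalVariation N w g := by
  simp only [clusterEnergy]
  field_simp
  ring

theorem ConvexOn.sum_apply {κ E : Type*} [Fintype κ] [AddCommMonoid E] [Module ℝ E]
    {φ : κ → E → ℝ} (hφ : ∀ r, ConvexOn ℝ univ (φ r)) :
    ConvexOn ℝ univ fun F : κ → E => ∑ r, φ r (F r) := by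
  refine ⟨convex_univ, fun F _ G _ a b ha hb hab => ?_⟩
  simp only [smul_eq_mul, mul_sum, ← sum_add_distrib]
  exact sum_le_sum fun r _ => (hφ r).2 trivial trivial ha hb hab

theorem le_of_forall_mem_Ioc_le_add_mul {a b c : ℝ} (h : ∀ t ∈ Ioc (0 : ℝ) 1, a ≤ b + t * c) :
    a ≤ b := by
  have hlim : Tendsto (fun t : ℝ => b + t * c) (𝓝[>] 0) (𝓝 b) := by
    have hcont : Continuous fun t : ℝ => b + t * c := by fun_prop
    simpa using (hcont.tendsto 0).mono_left nhdsWithin_le_nhds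
  exact ge_of_tendsto hlim (eventually_of_mem (Ioc_mem_nhdsGT one_pos) h)

theorem ConvexOn.prox_optimality {κ ι : Type*} [Fintype κ] [Fintype ι] {C : Set (κ → ι → ℝ)}
    {φ : (κ → ι → ℝ) → ℝ} (hφ : ConvexOn ℝ C φ) {X Z : κ → ι → ℝ} (hX : X ∈ C)
    (hmin : ∀ G ∈ C, φ X + 1 / 2 * ∑ r, ∑ i, (X r i - Z r i) ^ 2 ≤
      φ G + 1 / 2 * ∑ r, ∑ i, (G r i - Z r i) ^ 2)
    {G : κ → ι → ℝ} (hG : G ∈ C) :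
    φ X ≤ φ G + ∑ r, ∑ i, (X r i - Z r i) * (G r i - X r i) := by
  refine le_of_forall_mem_Ioc_le_add_mul (c := 1 / 2 * ∑ r, ∑ i, (G r i - X r i) ^ 2) fun t ht => ?_
  have hGt : (1 - t) • X + t • G ∈ C := hφ.1 hX hG (by linarith [ht.2]) ht.1.le (by ring)
  have hconv : φ ((1 - t) • X + t • G) ≤ (1 - t) * φ X + t * φ G :=
    hφ.2 hX hG (by linarith [ht.2]) ht.1.le (by ring)
  have hexp : ∑ r, ∑ i, (((1 - t) • X + t • G) r i - Z r i) ^ 2 = ∑ r, ∑ i, (X r i - Z r i) ^ 2 +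
      2 * t * ∑ r, ∑ i, (X r i - Z r i) * (G r i - X r i) +
      t ^ 2 * ∑ r, ∑ i, (G r i - X r i) ^ 2 := by
    simp only [mul_sum, ← sum_add_distrib]
    refine sum_congr rfl fun r _ => sum_congr rfl fun i _ => ?_
    simp only [Pi.add_apply, Pi.smul_apply, smul_eq_mul]
    ring
  have hminGt := hmin _ hGt
  rw [hexp] at hminGt
  refine le_of_mul_le_mul_left ?_ ht.1
  linarith

theorem energy_descent_estimate_general (N R : ℕ)
    (w : Fin N → Fin N → ℝ) (hnonneg : ∀ i j, 0 ≤ w i j)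
    (lam : ℝ) (hlam : 0 < lam) (hk : Nat.floor ((N : ℝ) / (lam + 1)) + 1 ≤ N)
    (Δ : ℝ) (hΔ : 0 < Δ)
    (C : Set (Fin R → Fin N → ℝ)) (hCconv : Convex ℝ C)
    (Fk : Fin R → Fin N → ℝ) (hFk : Fk ∈ C)
    (hBk : ∀ r, balanceFun N lam (Fk r) ≠ 0)
    (Vk : Fin R → Fin N → ℝ)
    (hVk : ∀ r, Vk r = fun i =>
      (Δ * clusterEnergy N w lam (Fk r) / balanceFun N lam (Fk r)) *
        medSubgrad N lam (Fk r) i)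
    (Fk1 : Fin R → Fin N → ℝ) (hFk1 : Fk1 ∈ C)
    (hmin : ∀ G ∈ C,
      (∑ r, (Δ / balanceFun N lam (Fk r)) * totalVariation N w (Fk1 r)) +
          (1 / 2) * ∑ r, ∑ i, (Fk1 r i - (Fk r i + Vk r i)) ^ 2 ≤
        (∑ r, (Δ / balanceFun N lam (Fk r)) * totalVariation N w (G r)) +
          (1 / 2) * ∑ r, ∑ i, (G r i - (Fk r i + Vk r i)) ^ 2) :
    Fk1 ∈ C ∧
      ((∀ r, balanceFun N lam (Fk1 r) ≠ 0) →
        ∑ r, (balanceFun N lam (Fk1 r) / balanceFun N lam (Fk r)) *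
            (clusterEnergy N w lam (Fk r) - clusterEnergy N w lam (Fk1 r)) ≥
          (∑ r, ∑ i, (Fk r i - Fk1 r i) ^ 2) / Δ) := by
  refine ⟨hFk1, fun hB1 => ?_⟩
  have hB0 : ∀ r, 0 < balanceFun N lam (Fk r) :=
    fun r => (balanceFun_nonneg hlam.le _).lt_of_ne' (hBk r)
  have hconv : ConvexOn ℝ C fun G : Fin R → Fin N → ℝ =>
      ∑ r, Δ / balanceFun N lam (Fk r) * totalVariation N w (G r) :=
    (ConvexOn.sum_apply fun r => (convexOn_totalVariation hnonneg).smul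
      (div_pos hΔ (hB0 r)).le).subset (subset_univ C) hCconv
  have hprox := hconv.prox_optimality (Z := fun r i => Fk r i + Vk r i) hFk1 hmin hFk
  have hsub : ∀ r, ∑ i, Vk r i * (Fk1 r i - Fk r i) ≤
      Δ * clusterEnergy N w lam (Fk r) / balanceFun N lam (Fk r) *
        (balanceFun N lam (Fk1 r) - balanceFun N lam (Fk r)) := by
    intro r
    have hd : 0 ≤ Δ * clusterEnergy N w lam (Fk r) / balanceFun N lam (Fk r) :=
      div_nonneg (mul_nonneg hΔ.le (div_nonneg (totalVariation_nonneg hnonneg _) (hB0 r).le))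
        (hB0 r).le
    rw [hVk r]
    simp only [mul_assoc, ← mul_sum]
    exact mul_le_mul_of_nonneg_left
      (by linarith [balanceFun_add_sum_medSubgrad_mul_le (by linarith) hk (Fk r) (Fk1 r)]) hd
  have hcross : ∑ r, ∑ i, (Fk1 r i - (Fk r i + Vk r i)) * (Fk r i - Fk1 r i) =
      ∑ r, ∑ i, Vk r i * (Fk1 r i - Fk r i) - ∑ r, ∑ i, (Fk r i - Fk1 r i) ^ 2 := by
    simp only [← sum_sub_distrib]
    exact sum_congr rfl fun r _ => sum_congr rfl fun i _ => by ring
  rw [ge_iff_le, div_le_iff₀ hΔ, sum_mul, sum_congr rfl fun r _ =>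
    balanceFun_div_mul_clusterEnergy_sub_mul (hBk r) (hB1 r) Δ]
  simp only [sum_add_distrib, sum_sub_distrib]
  linarith [sum_le_sum fun r (_ : r ∈ Finset.univ) => hsub r]

/-- Theorem 3, estimate of the energy descent.  A matrix
`F ∈ ℝ^{N×R}` is represented by its tuple of columns `F : Fin R → Fin N → ℝ`.
With `c_r = Δ/B(f_r^k)`, `d_r = Δ·E(f_r^k)/B(f_r^k)`, `𝓣(F) = ∑ c_r T(f_r)`,
`V^k` the matrix whose r-th column is `d_r` times the Theorem-2 subgradient of `B`
at `f_r^k`, and `F^{k+1}` minimizing `G ↦ 𝓣(G) + (1/2)‖G − (F^k + V^k)‖_F²` over the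
nonempty convex set `C ∋ F^k`:  then `F^{k+1} ∈ C` and, when `B(f_r^{k+1}) ≠ 0` for
all `r`, `∑_r (B_r^{k+1}/B_r^k)(E_r^k − E_r^{k+1}) ≥ ‖F^k − F^{k+1}‖_F²/Δ`. -/
theorem energy_descent_estimate (N R : ℕ) (hN : 0 < N) (hR : 1 ≤ R)
    (w : Fin N → Fin N → ℝ) (hsymm : ∀ i j, w i j = w j i) (hnonneg : ∀ i j, 0 ≤ w i j)
    (lam : ℝ) (hlam : 0 < lam) (hk : Nat.floor ((N : ℝ) / (lam + 1)) + 1 ≤ N)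
    (Δ : ℝ) (hΔ : 0 < Δ)
    (C : Set (Fin R → Fin N → ℝ)) (hCne : C.Nonempty) (hCconv : Convex ℝ C)
    (Fk : Fin R → Fin N → ℝ) (hFk : Fk ∈ C)
    (hBk : ∀ r, balanceFun N lam (Fk r) ≠ 0)
    (Vk : Fin R → Fin N → ℝ)
    (hVk : ∀ r, Vk r = fun i =>
      (Δ * clusterEnergy N w lam (Fk r) / balanceFun N lam (Fk r)) *
        medSubgrad N lam (Fk r) i)
    (Fk1 : Fin R → Fin N → ℝ) (hFk1 : Fk1 ∈ C)
    (hmin : ∀ G ∈ C,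
      (∑ r, (Δ / balanceFun N lam (Fk r)) * totalVariation N w (Fk1 r)) +
          (1 / 2) * ∑ r, ∑ i, (Fk1 r i - (Fk r i + Vk r i)) ^ 2 ≤
        (∑ r, (Δ / balanceFun N lam (Fk r)) * totalVariation N w (G r)) +
          (1 / 2) * ∑ r, ∑ i, (G r i - (Fk r i + Vk r i)) ^ 2) :
    Fk1 ∈ C ∧
      ((∀ r, balanceFun N lam (Fk1 r) ≠ 0) →
        ∑ r, (balanceFun N lam (Fk1 r) / balanceFun N lam (Fk r)) *
            (clusterEnergy N w lam (Fk r) - clusterEnergy N w lam (Fk1 r)) ≥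
          (∑ r, ∑ i, (Fk r i - Fk1 r i) ^ 2) / Δ) :=
  energy_descent_estimate_general N R w hnonneg lam hlam hk Δ hΔ C hCconv Fk hFk hBk Vk hVk Fk1 hFk1
    hmin
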